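/- arXiv:1910.05966 — 2 statements merged into one kernel-verified Lean document; each statement's English description precedes it below -/
import Mathlib

section
/- Let G be a connected d-regular graph on n vertices with normalized adjacency operator A and second largest eigenvalue λ_2. For every nonempty proper subset S ⊊ V, one has 1 − λ_2 ≤ (n·|E(S, V∖S)|)/(d·|S|·|V∖S|), where E(S, V∖S) is the set of edges with one endpoint in S and the other in V∖S. -/
/-!
The vector `f = |Sᶜ| • 1_S - |S| • 1_Sᶜ` has mean zero, and by connectivity the eigenvectors of
`A` for the eigenvalue `1` are the constants, so expanding `f` in an orthonormal eigenbasis of `A`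
gives the Rayleigh bound `⟪f, A f⟫ ≤ λ₂ ‖f‖²`. For a `d`-regular graph `d (1 - A)` is the
Laplacian `L`, whose quadratic form sums `(f u - f v)²` over the edges; for this `f` it equals
`n² |E(S, Sᶜ)|`, while `‖f‖² = |S| |Sᶜ| n`. Hence `d (1 - λ₂) |S| |Sᶜ| n ≤ n² |E(S, Sᶜ)|`.
-/

open Matrix Finset

theorem Matrix.IsHermitian.dotProduct_mulVec_le_of_orthogonal {ι : Type*} [Fintype ι]
    [DecidableEq ι] {A : Matrix ι ι ℝ} (hA : A.IsHermitian) {c : ℝ} {f : ι → ℝ}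
    (hf : ∀ μ, c < μ → ∀ g, A *ᵥ g = μ • g → f ⬝ᵥ g = 0) :
    f ⬝ᵥ (A *ᵥ f) ≤ c * (f ⬝ᵥ f) := by
  set b := hA.eigenvectorBasis
  set coeff : ι → ℝ := fun i => f ⬝ᵥ ⇑(b i)
  have hexp : f = ∑ i, coeff i • ⇑(b i) := by
    simpa [EuclideanSpace.inner_eq_star_dotProduct] using
      (congrArg WithLp.ofLp (b.sum_repr' (WithLp.toLp 2 f))).symm
  have hsum : ∀ h : ι → ℝ, f ⬝ᵥ (∑ i, coeff i • h i • ⇑(b i)) = ∑ i, h i * coeff i ^ 2 := by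
    intro h
    simp only [dotProduct_sum, dotProduct_smul, smul_eq_mul]
    exact sum_congr rfl fun i _ => by ring
  have hquad : f ⬝ᵥ (A *ᵥ f) = ∑ i, hA.eigenvalues i * coeff i ^ 2 := by
    rw [← hsum]
    nth_rewrite 2 [hexp]
    simp only [mulVec_sum, mulVec_smul, hA.mulVec_eigenvectorBasis, b]
  have hnorm : f ⬝ᵥ f = ∑ i, coeff i ^ 2 := by
    simpa [← hexp] using hsum 1
  rw [hquad, hnorm, mul_sum]
  refine sum_le_sum fun i _ => ?_
  rcases le_or_gt (hA.eigenvalues i) c with hle | hlt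
  · exact mul_le_mul_of_nonneg_right hle (sq_nonneg _)
  · have hzero : coeff i = 0 := hf _ hlt _ (hA.mulVec_eigenvectorBasis i)
    simp [hzero]

section CutVector

variable {V : Type*} [Fintype V] [DecidableEq V]

def cutVector (S : Finset V) : V → ℝ := fun v => if v ∈ S then (#Sᶜ : ℝ) else -(#S : ℝ)

theorem sum_comp_cutVector (S : Finset V) (g : ℝ → ℝ) :
    ∑ v, g (cutVector S v) = #S * g #Sᶜ + #Sᶜ * g (-#S) := by
  have hS : ∀ v ∈ S, g (cutVector S v) = g #Sᶜ := fun v hv => by simp [cutVector, hv]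
  have hSc : ∀ v ∈ Sᶜ, g (cutVector S v) = g (-#S) := fun v hv => by
    simp [cutVector, mem_compl.mp hv]
  rw [← sum_add_sum_compl S, sum_congr rfl hS, sum_congr rfl hSc]
  simp

theorem sum_cutVector (S : Finset V) : ∑ v, cutVector S v = 0 :=
  (sum_comp_cutVector S id).trans (by simp only [id]; ring)

theorem cutVector_dotProduct_self (S : Finset V) :
    cutVector S ⬝ᵥ cutVector S = #S * #Sᶜ * Fintype.card V := by
  rw [dotProduct, sum_comp_cutVector S fun x => x * x, ← S.card_add_card_compl]
  push_cast
  ring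

end CutVector

namespace SimpleGraph

variable {V : Type*} [Fintype V] {G : SimpleGraph V} [DecidableRel G.Adj]

theorem IsRegularOfDegree.pos_of_preconnected [Nontrivial V] {d : ℕ}
    (h : G.IsRegularOfDegree d) (hG : G.Preconnected) : 0 < d := by
  obtain ⟨v⟩ := ‹Nontrivial V›.to_nonempty
  rw [← h v]
  exact (G.degree_pos_iff_exists_adj v).mpr (hG.exists_adj_of_nontrivial v)

variable [DecidableEq V]

theorem IsRegularOfDegree.lapMatrix_eq {R : Type*} [Ring R] {d : ℕ}
    (h : G.IsRegularOfDegree d) : G.lapMatrix R = (d : R) • 1 - G.adjMatrix R := by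
  rw [lapMatrix, degMatrix, smul_one_eq_diagonal]
  simp_rw [h _]

theorem IsRegularOfDegree.inv_smul_adjMatrix_eq {R : Type*} [Field R] {d : ℕ}
    (h : G.IsRegularOfDegree d) (hd : (d : R) ≠ 0) :
    (d : R)⁻¹ • G.adjMatrix R = 1 - (d : R)⁻¹ • G.lapMatrix R := by
  rw [h.lapMatrix_eq, smul_sub, smul_smul, inv_mul_cancel₀ hd, one_smul, sub_sub_cancel]

theorem Connected.dotProduct_eq_zero_of_lapMatrix_mulVec_eq_zero (hG : G.Connected)
    {f g : V → ℝ} (hf : ∑ v, f v = 0) (hg : G.lapMatrix ℝ *ᵥ g = 0) : f ⬝ᵥ g = 0 := by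
  obtain ⟨v₀⟩ := hG.nonempty
  have hconst : g = fun _ => g v₀ :=
    funext fun v => (lapMatrix_mulVec_eq_zero_iff_forall_reachable G).mp hg v v₀ (hG v v₀)
  rw [hconst, dotProduct, ← sum_mul, hf, zero_mul]

theorem Connected.dotProduct_mulVec_le_of_sum_eq_zero (hG : G.Connected) {d : ℕ}
    (hreg : G.IsRegularOfDegree d) (hd : (d : ℝ) ≠ 0) {c : ℝ}
    (hspec : ∀ μ : ℝ, (∃ g : V → ℝ, g ≠ 0 ∧ ((d : ℝ)⁻¹ • G.adjMatrix ℝ) *ᵥ g = μ • g) →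
      μ = 1 ∨ μ ≤ c)
    {f : V → ℝ} (hf : ∑ v, f v = 0) :
    f ⬝ᵥ (((d : ℝ)⁻¹ • G.adjMatrix ℝ) *ᵥ f) ≤ c * (f ⬝ᵥ f) := by
  have hherm := (G.isHermitian_adjMatrix ℝ).smul (IsSelfAdjoint.all (d : ℝ)⁻¹)
  refine hherm.dotProduct_mulVec_le_of_orthogonal fun μ hμ g hg => ?_
  by_cases hg0 : g = 0
  · simp [hg0]
  obtain rfl : μ = 1 := (hspec μ ⟨g, hg0, hg⟩).resolve_right hμ.not_ge
  refine hG.dotProduct_eq_zero_of_lapMatrix_mulVec_eq_zero hf ?_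
  simpa [hreg.inv_smul_adjMatrix_eq hd, sub_mulVec, smul_mulVec, hd] using hg

variable (G)

theorem sum_adj_sq_sub_ite {R : Type*} [CommRing R] (S : Finset V) (x y : R) :
    ∑ u, ∑ v, (if G.Adj u v then
      ((if u ∈ S then x else y) - (if v ∈ S then x else y)) ^ 2 else 0) =
      2 * (x - y) ^ 2 * #(G.interedges S Sᶜ) := by
  have hterm : ∀ u v, (if G.Adj u v then
      ((if u ∈ S then x else y) - (if v ∈ S then x else y)) ^ 2 else 0) =
      (x - y) ^ 2 * ((if (u, v) ∈ G.interedges S Sᶜ then 1 else 0) +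
        (if (v, u) ∈ G.interedges S Sᶜ then 1 else 0)) := by
    intro u v
    simp only [mk_mem_interedges_iff, mem_compl, G.adj_comm v u]
    by_cases hu : u ∈ S <;> by_cases hv : v ∈ S <;> by_cases huv : G.Adj u v <;>
      simp [hu, hv, huv, sub_sq_comm y x]
  have hcount : ∑ u, ∑ v, (if (u, v) ∈ G.interedges S Sᶜ then (1 : R) else 0) =
      #(G.interedges S Sᶜ) := by
    rw [← Fintype.sum_prod_type', sum_boole]
    simp
  simp_rw [hterm, ← mul_sum, sum_add_distrib]
  rw [sum_comm (f := fun u v => if (v, u) ∈ G.interedges S Sᶜ then (1 : R) else 0), hcount]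
  ring

theorem cutVector_dotProduct_lapMatrix_mulVec (S : Finset V) :
    cutVector S ⬝ᵥ (G.lapMatrix ℝ *ᵥ cutVector S) =
      Fintype.card V ^ 2 * #(G.interedges S Sᶜ) := by
  rw [← toLinearMap₂'_apply', lapMatrix_toLinearMap₂' ℝ G]
  unfold cutVector
  rw [G.sum_adj_sq_sub_ite, ← S.card_add_card_compl]
  push_cast
  ring

end SimpleGraph

theorem cheeger_bound_general {V : Type*} [Fintype V] [DecidableEq V]
    (G : SimpleGraph V) [DecidableRel G.Adj] (d : ℕ)
    (hreg : G.IsRegularOfDegree d) (hconn : G.Connected)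
    (A : Matrix V V ℝ) (hA : A = (d : ℝ)⁻¹ • G.adjMatrix ℝ)
    (lam2 : ℝ)
    (hSecond : ∀ μ : ℝ, (∃ f : V → ℝ, f ≠ 0 ∧ A.mulVec f = μ • f) → μ = 1 ∨ μ ≤ lam2)
    (S : Finset V) (hne : S.Nonempty) (hproper : S ≠ univ) :
    1 - lam2 ≤ ((Fintype.card V : ℝ) *
        (((S ×ˢ Sᶜ).filter fun p => G.Adj p.1 p.2).card : ℝ)) /
      ((d : ℝ) * (S.card : ℝ) * (Sᶜ.card : ℝ)) := by
  subst hA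
  obtain ⟨s, hs⟩ := hne
  obtain ⟨t, ht⟩ : ∃ t, t ∉ S := by simpa [eq_univ_iff_forall] using hproper
  have : Nontrivial V := nontrivial_of_ne s t (ne_of_mem_of_not_mem hs ht)
  have hd : 0 < (d : ℝ) := Nat.cast_pos.mpr (hreg.pos_of_preconnected hconn.preconnected)
  have hray := hconn.dotProduct_mulVec_le_of_sum_eq_zero hreg hd.ne' hSecond (sum_cutVector S)
  rw [hreg.inv_smul_adjMatrix_eq hd.ne', sub_mulVec, one_mulVec, smul_mulVec, dotProduct_sub,
    dotProduct_smul, smul_eq_mul, cutVector_dotProduct_self,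
    G.cutVector_dotProduct_lapMatrix_mulVec] at hray
  have ha : 0 < (#S : ℝ) := by exact_mod_cast card_pos.mpr ⟨s, hs⟩
  have hb : 0 < (#Sᶜ : ℝ) := by exact_mod_cast card_pos.mpr ⟨t, mem_compl.mpr ht⟩
  have hn : 0 < (Fintype.card V : ℝ) := by exact_mod_cast Fintype.card_pos
  rw [le_div_iff₀ (by positivity)]
  change _ ≤ _ * (#(G.interedges S Sᶜ) : ℝ)
  calc (1 - lam2) * (d * #S * #Sᶜ)
      = d / Fintype.card V * ((1 - lam2) * (#S * #Sᶜ * Fintype.card V)) := by field_simp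
    _ ≤ d / Fintype.card V * ((d : ℝ)⁻¹ * (Fintype.card V ^ 2 * #(G.interedges S Sᶜ))) :=
        mul_le_mul_of_nonneg_left (by linarith) (by positivity)
    _ = Fintype.card V * #(G.interedges S Sᶜ) := by field_simp

/-- **Cheeger (Alon–Milman, Tanner) bound.** For every nonempty proper subset `S` of a
connected `d`-regular graph with second largest normalized adjacency eigenvalue `lam2`,
`1 - lam2 ≤ n·|E(S, Sᶜ)| / (d·|S|·|Sᶜ|)`. -/
theorem cheeger_bound {V : Type*} [Fintype V] [DecidableEq V]
    (G : SimpleGraph V) [DecidableRel G.Adj] (d : ℕ)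
    (hreg : G.IsRegularOfDegree d) (hconn : G.Connected)
    (A : Matrix V V ℝ) (hA : A = (d : ℝ)⁻¹ • G.adjMatrix ℝ)
    (lam2 : ℝ) (hlt : lam2 < 1)
    (hEig : ∃ f : V → ℝ, f ≠ 0 ∧ A.mulVec f = lam2 • f)
    (hSecond : ∀ μ : ℝ, (∃ f : V → ℝ, f ≠ 0 ∧ A.mulVec f = μ • f) → μ = 1 ∨ μ ≤ lam2)
    (S : Finset V) (hne : S.Nonempty) (hproper : S ≠ univ) :
    1 - lam2 ≤ ((Fintype.card V : ℝ) *
        (((S ×ˢ Sᶜ).filter fun p => G.Adj p.1 p.2).card : ℝ)) /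
      ((d : ℝ) * (S.card : ℝ) * (Sᶜ.card : ℝ)) :=
  cheeger_bound_general G d hreg hconn A hA lam2 hSecond S hne hproper
end

section
/- Let G_1, G_2 be finite connected regular graphs and W_1 ⊆ V_1 a graphical design of order k_1 in G_1. Then W_1 × V_2 is a graphical design of order at most k_1 in the weak product G_1 × G_2. -/
/-! The adjacency matrix of the weak product is the Kronecker product of the adjacency matrices,
so the normalized operator is `A₁ ⊗ₖ A₂`. Since the constant function is an eigenfunction of
`A₂`, every eigenfunction `f` of `A₁` lifts to the eigenfunction `f ∘ Prod.fst = f ⊗ 1` of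
`A₁ ⊗ₖ A₂`, and `1_{W₁ × V₂}` is the lift of `1_{W₁}`; so the expression of `1_{W₁}` lifts term
by term. -/

open Matrix Finset

/-- The weak (tensor) product of two simple graphs. -/
def weakProd {V₁ V₂ : Type*} (G₁ : SimpleGraph V₁) (G₂ : SimpleGraph V₂) :
    SimpleGraph (V₁ × V₂) where
  Adj p q := G₁.Adj p.1 q.1 ∧ G₂.Adj p.2 q.2
  symm := ⟨fun _ _ h => ⟨G₁.symm.symm _ _ h.1, G₂.symm.symm _ _ h.2⟩⟩
  loopless := ⟨fun p h => G₁.loopless.irrefl p.1 h.1⟩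

instance weakProd.instDecidableRelAdj {V₁ V₂ : Type*} (G₁ : SimpleGraph V₁)
    (G₂ : SimpleGraph V₂) [DecidableRel G₁.Adj] [DecidableRel G₂.Adj] :
    DecidableRel (weakProd G₁ G₂).Adj :=
  fun p q => inferInstanceAs (Decidable (G₁.Adj p.1 q.1 ∧ G₂.Adj p.2 q.2))

/-- `1_W` is a linear combination of the constant function and `k` eigenfunctions of
the operator `A`. A graphical design `W` has order `k` if `k` is minimal with this
property. -/
def IsDesignExpr {V : Type*} [Fintype V] [DecidableEq V] (A : Matrix V V ℝ)
    (W : Finset V) (k : ℕ) : Prop :=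
  ∃ (c : ℝ) (f : Fin k → V → ℝ) (a : Fin k → ℝ) (μ : Fin k → ℝ),
    (∀ j, f j ≠ 0 ∧ A.mulVec (f j) = μ j • f j) ∧
    ∀ v, (if v ∈ W then (1 : ℝ) else 0) = c + ∑ j, a j * f j v

open scoped Kronecker

theorem weakProd_adjMatrix {V₁ V₂ : Type*} (R : Type*) [NonAssocSemiring R]
    (G₁ : SimpleGraph V₁) (G₂ : SimpleGraph V₂) [DecidableRel G₁.Adj] [DecidableRel G₂.Adj] :
    (weakProd G₁ G₂).adjMatrix R = G₁.adjMatrix R ⊗ₖ G₂.adjMatrix R := by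
  ext p q
  simp only [SimpleGraph.adjMatrix_apply, kroneckerMap_apply, ite_zero_mul_ite_zero, mul_one]
  rfl

theorem Matrix.kronecker_mulVec_mul {l m n p R : Type*} [Fintype m] [Fintype p] [CommSemiring R]
    (A : Matrix l m R) (B : Matrix n p R) (f : m → R) (g : p → R) :
    (A ⊗ₖ B) *ᵥ (fun q => f q.1 * g q.2) = fun i => (A *ᵥ f) i.1 * (B *ᵥ g) i.2 := by
  ext i
  simp only [mulVec, dotProduct, kroneckerMap_apply, Fintype.sum_prod_type, Finset.sum_mul_sum]
  exact Finset.sum_congr rfl fun _ _ => Finset.sum_congr rfl fun _ _ => by ring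

theorem IsDesignExpr.kronecker_prod_univ {V₁ V₂ : Type*} [Fintype V₁] [Fintype V₂]
    [DecidableEq V₁] [DecidableEq V₂] [Nonempty V₂] {A₁ : Matrix V₁ V₁ ℝ} {B : Matrix V₂ V₂ ℝ}
    {r : ℝ} (hB : B *ᵥ (fun _ => 1) = r • fun _ => 1) {W : Finset V₁} {k : ℕ}
    (h : IsDesignExpr A₁ W k) : IsDesignExpr (A₁ ⊗ₖ B) (W ×ˢ univ) k := by
  obtain ⟨c, f, a, μ, hf, hW⟩ := h
  refine ⟨c, fun j q => f j q.1, a, fun j => μ j * r, fun j => ⟨?_, ?_⟩, fun q => ?_⟩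
  · obtain ⟨v, hv⟩ := Function.ne_iff.mp (hf j).1
    exact fun h0 => hv (congrFun h0 (v, Classical.arbitrary V₂))
  · have hlift := Matrix.kronecker_mulVec_mul A₁ B (f j) fun _ => 1
    simp only [mul_one] at hlift
    rw [hlift, (hf j).2, hB]
    ext q
    simp only [Pi.smul_apply, smul_eq_mul]
    ring
  · simpa [Finset.mem_product] using hW q.1

theorem weakProd_design_cylinder_general {V₁ V₂ : Type*} [Fintype V₁] [Fintype V₂]
    [DecidableEq V₁] [DecidableEq V₂]
    (G₁ : SimpleGraph V₁) (G₂ : SimpleGraph V₂)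
    [DecidableRel G₁.Adj] [DecidableRel G₂.Adj]
    (hconn₂ : G₂.Connected)
    (d₁ d₂ : ℕ) (hreg₂ : G₂.IsRegularOfDegree d₂)
    (A₁ : Matrix V₁ V₁ ℝ) (hA₁ : A₁ = (d₁ : ℝ)⁻¹ • G₁.adjMatrix ℝ)
    (A : Matrix (V₁ × V₂) (V₁ × V₂) ℝ)
    (hA : A = ((d₁ * d₂ : ℕ) : ℝ)⁻¹ • (weakProd G₁ G₂).adjMatrix ℝ)
    (W₁ : Finset V₁) (k₁ : ℕ)
    (h₁ : IsDesignExpr A₁ W₁ k₁) :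
    ∃ m ≤ k₁, IsDesignExpr A (W₁ ×ˢ (univ : Finset V₂)) m := by
  have := hconn₂.nonempty
  set A₂ : Matrix V₂ V₂ ℝ := (d₂ : ℝ)⁻¹ • G₂.adjMatrix ℝ
  have hA_kronecker : A = A₁ ⊗ₖ A₂ := by
    rw [hA, hA₁, weakProd_adjMatrix, smul_kronecker, kronecker_smul, smul_smul]
    push_cast
    rw [mul_inv, mul_comm]
  -- the eigenvalue `d₂⁻¹ * d₂` is `1`, or `0` when `d₂ = 0` (and then `A = 0`)
  have hA₂ : A₂ *ᵥ (fun _ => 1) = ((d₂ : ℝ)⁻¹ * d₂) • fun _ => 1 := by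
    ext v
    simp [A₂, smul_mulVec, hreg₂ v]
  exact ⟨k₁, le_rfl, hA_kronecker ▸ h₁.kronecker_prod_univ hA₂⟩

/-- If `W₁` is a graphical design of order `k₁` in the connected regular graph `G₁`, then
`W₁ × V₂` is a graphical design of order at most `k₁` in the weak product `G₁ × G₂`. -/
theorem weakProd_design_cylinder {V₁ V₂ : Type*} [Fintype V₁] [Fintype V₂]
    [DecidableEq V₁] [DecidableEq V₂]
    (G₁ : SimpleGraph V₁) (G₂ : SimpleGraph V₂)
    [DecidableRel G₁.Adj] [DecidableRel G₂.Adj]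
    (hconn₁ : G₁.Connected) (hconn₂ : G₂.Connected)
    (d₁ d₂ : ℕ) (hreg₁ : G₁.IsRegularOfDegree d₁) (hreg₂ : G₂.IsRegularOfDegree d₂)
    (A₁ : Matrix V₁ V₁ ℝ) (hA₁ : A₁ = (d₁ : ℝ)⁻¹ • G₁.adjMatrix ℝ)
    (A : Matrix (V₁ × V₂) (V₁ × V₂) ℝ)
    (hA : A = ((d₁ * d₂ : ℕ) : ℝ)⁻¹ • (weakProd G₁ G₂).adjMatrix ℝ)
    (W₁ : Finset V₁) (k₁ : ℕ)
    (h₁ : IsDesignExpr A₁ W₁ k₁) (h₁min : ∀ m < k₁, ¬ IsDesignExpr A₁ W₁ m) :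
    ∃ m ≤ k₁, IsDesignExpr A (W₁ ×ˢ (univ : Finset V₂)) m :=
  weakProd_design_cylinder_general G₁ G₂ hconn₂ d₁ d₂ hreg₂ A₁ hA₁ A hA W₁ k₁ h₁
end
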